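/- Let f be an n-variable Boolean function with f ≠ δ_0 and f^c ≠ δ_0, where f^c = f + δ_0 is the algebraic complement of f. Then |FAI(f^c) − FAI(f)| ≤ 2. -/

import Mathlib

open scoped BigOperators

abbrev BF (n : ℕ) := (Fin n → ZMod 2) → ZMod 2

/-- Algebraic degree of a Boolean function: the least `d` such that `f` is
represented by a multivariate polynomial of total degree at most `d`. -/
noncomputable def degB {n : ℕ} (f : BF n) : ℕ :=
  sInf {d | ∃ p : MvPolynomial (Fin n) (ZMod 2),
    (∀ x, MvPolynomial.eval x p = f x) ∧ p.totalDegree ≤ d}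

/-- Fast algebraic immunity. -/
noncomputable def FAI {n : ℕ} (f : BF n) : ℕ :=
  sInf {m | ∃ g : BF n, g ≠ 1 ∧ f * g ≠ 0 ∧ m = degB g + degB (f * g)}

/-- Minimum degree of a nonzero annihilator. -/
noncomputable def LDA {n : ℕ} (f : BF n) : ℕ :=
  sInf {m | ∃ g : BF n, g ≠ 0 ∧ f * g = 0 ∧ m = degB g}

noncomputable def AI {n : ℕ} (f : BF n) : ℕ := min (LDA f) (LDA (1 + f))

noncomputable def muk {n : ℕ} (k : ℕ) (f : BF n) : ℕ :=
  sInf {m | ∃ g : BF n, degB g ≤ k ∧ f * g ≠ 0 ∧ m = degB (f * g)}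

def wtB {n : ℕ} (f : BF n) : ℕ := (Finset.univ.filter (fun x => f x = 1)).card

def IsAffineAut {n : ℕ} (A : (Fin n → ZMod 2) → (Fin n → ZMod 2)) : Prop :=
  ∃ (L : (Fin n → ZMod 2) ≃ₗ[ZMod 2] (Fin n → ZMod 2)) (b : Fin n → ZMod 2),
    ∀ x, A x = L x + b

noncomputable def RMcode (n e : ℕ) :
    Submodule (ZMod 2) ((Fin n → ZMod 2) → ZMod 2) :=
  Submodule.span (ZMod 2) {f | ∃ p : MvPolynomial (Fin n) (ZMod 2),
    p.totalDegree ≤ e ∧ ∀ x, MvPolynomial.eval x p = f x}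

/-- The code obtained by keeping only the coordinates in `S`
(i.e. puncturing on the complement of `S`). -/
noncomputable def restrictCode {n : ℕ}
    (C : Submodule (ZMod 2) ((Fin n → ZMod 2) → ZMod 2))
    (S : Set (Fin n → ZMod 2)) : Submodule (ZMod 2) (S → ZMod 2) :=
  C.map (LinearMap.funLeft (ZMod 2) (ZMod 2) (Subtype.val : S → (Fin n → ZMod 2)))

noncomputable def dualCode {ι : Type*} [Fintype ι]
    (C : Submodule (ZMod 2) (ι → ZMod 2)) : Submodule (ZMod 2) (ι → ZMod 2) where
  carrier := {w | ∀ c ∈ C, ∑ i, w i * c i = 0}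
  add_mem' := by
    intro a b ha hb c hc
    simp only [Pi.add_apply, add_mul, Finset.sum_add_distrib, ha c hc, hb c hc, add_zero]
  zero_mem' := by intro c hc; simp
  smul_mem' := by
    intro r a ha c hc
    simp only [Pi.smul_apply, smul_eq_mul, mul_assoc, ← Finset.mul_sum, ha c hc, mul_zero]

noncomputable instance instFintypeSubsetBF {α : Type*} [Fintype α] (S : Set α) :
    Fintype ↥S := Fintype.ofFinite _

def suppB {n : ℕ} (f : BF n) : Set (Fin n → ZMod 2) := {x | f x = 1}


def delta0 {n : ℕ} : BF n := fun x => if x = 0 then 1 else 0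

/-
If `g` realises `FAI f` and `f g` vanishes somewhere off the origin, multiplying `g` by a
coordinate `xᵢ` that is `1` at such a point gives a witness for `f + δ₀` of cost at most
`FAI f + 2`, because `δ₀ xᵢ = 0`. Otherwise `f g = δ₀`, which has odd weight and hence degree `n`,
so `FAI f ≥ n + 1`; but every `h ∉ {0, δ₀}` has `FAI h ≤ deg xᵢ + deg (h xᵢ) ≤ n + 1`.
The claim follows by symmetry, since `f + δ₀ + δ₀ = f`.
-/

open MvPolynomial

section

variable {n : ℕ}

def coord (i : Fin n) : BF n := fun x => x i

@[simp]
lemma coord_apply (i : Fin n) (x : Fin n → ZMod 2) : coord i x = x i := rfl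

lemma exists_eval_eq_totalDegree_le (f : BF n) :
    ∃ p : MvPolynomial (Fin n) (ZMod 2), (∀ x, eval x p = f x) ∧ p.totalDegree ≤ n := by
  obtain ⟨p, hp, hpf⟩ := (Submodule.mem_map.mp
    ((map_restrict_dom_evalₗ (ZMod 2) (Fin n)).symm ▸ Submodule.mem_top : f ∈ _))
  refine ⟨p, fun x => congrFun hpf x, Finset.sup_le fun s hs => ?_⟩
  rw [mem_restrictDegree] at hp
  calc s.sum (fun _ e => e) = ∑ i, s i := Finsupp.sum_fintype _ _ fun _ => rfl
    _ ≤ ∑ _i : Fin n, 1 := Finset.sum_le_sum fun i _ => by simpa using hp s hs i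
    _ = n := by simp

lemma degB_le_totalDegree {f : BF n} (p : MvPolynomial (Fin n) (ZMod 2))
    (hp : ∀ x, eval x p = f x) : degB f ≤ p.totalDegree :=
  Nat.sInf_le ⟨p, hp, le_rfl⟩

lemma exists_eval_eq_totalDegree_le_degB (f : BF n) :
    ∃ p : MvPolynomial (Fin n) (ZMod 2), (∀ x, eval x p = f x) ∧ p.totalDegree ≤ degB f := by
  obtain ⟨p, hp, hpn⟩ := exists_eval_eq_totalDegree_le f
  exact Nat.sInf_mem (s := {d | ∃ p : MvPolynomial (Fin n) (ZMod 2),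
    (∀ x, eval x p = f x) ∧ p.totalDegree ≤ d}) ⟨n, p, hp, hpn⟩

lemma degB_le (f : BF n) : degB f ≤ n := by
  obtain ⟨p, hp, hpn⟩ := exists_eval_eq_totalDegree_le f
  exact (degB_le_totalDegree p hp).trans hpn

lemma degB_mul_le (u v : BF n) : degB (u * v) ≤ degB u + degB v := by
  obtain ⟨p, hp, hpu⟩ := exists_eval_eq_totalDegree_le_degB u
  obtain ⟨q, hq, hqv⟩ := exists_eval_eq_totalDegree_le_degB v
  calc degB (u * v) ≤ (p * q).totalDegree := degB_le_totalDegree _ fun x => by simp [hp, hq]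
    _ ≤ p.totalDegree + q.totalDegree := totalDegree_mul p q
    _ ≤ degB u + degB v := add_le_add hpu hqv

lemma degB_coord_le (i : Fin n) : degB (coord i) ≤ 1 :=
  (degB_le_totalDegree (X i) fun x => by simp).trans (totalDegree_X i).le

lemma degB_mul_coord_le (g : BF n) (i : Fin n) : degB (g * coord i) ≤ degB g + 1 :=
  (degB_mul_le g (coord i)).trans (add_le_add_right (degB_coord_le i) _)

lemma one_le_degB {g : BF n} (hg0 : g ≠ 0) (hg1 : g ≠ 1) : 1 ≤ degB g := by
  by_contra! hdeg
  obtain ⟨p, hp, hpg⟩ := exists_eval_eq_totalDegree_le_degB g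
  obtain ⟨c, rfl⟩ : ∃ c, p = C c := ⟨_, totalDegree_eq_zero_iff_eq_C.mp (by omega)⟩
  have hg : g = fun _ => c := funext fun x => by rw [← hp x, eval_C]
  rcases (by decide : ∀ c : ZMod 2, c = 0 ∨ c = 1) c with hc | hc
  · exact hg0 (hg.trans (by rw [hc]; rfl))
  · exact hg1 (hg.trans (by rw [hc]; rfl))

/-- By Chevalley–Warning, every polynomial of degree `< n` sums to zero over `𝔽₂ⁿ`. -/
lemma le_degB_of_sum_ne_zero {f : BF n} (hf : ∑ x, f x ≠ 0) : n ≤ degB f := by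
  by_contra! hdeg
  obtain ⟨p, hp, hpf⟩ := exists_eval_eq_totalDegree_le_degB f
  apply hf
  simp_rw [← hp]
  exact sum_eval_eq_zero p (by simpa using hpf.trans_lt hdeg)

lemma le_degB_delta0 : n ≤ degB (delta0 : BF n) :=
  le_degB_of_sum_ne_zero (by simp [delta0])

lemma delta0_mul_coord (i : Fin n) : delta0 * coord i = 0 := by
  funext x
  by_cases hx : x = 0 <;> simp [delta0, hx]

lemma mul_coord_ne_one (g : BF n) (i : Fin n) : g * coord i ≠ 1 := fun h => by
  simpa using congrFun h 0

lemma coord_ne_one (i : Fin n) : coord i ≠ 1 := by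
  simpa using mul_coord_ne_one 1 i

lemma eq_delta0_of_apply_eq_zero {h : BF n} (h0 : h ≠ 0) (hsupp : ∀ a ≠ 0, h a = 0) :
    h = delta0 := by
  have h00 : h 0 ≠ 0 := fun h00 => h0 (funext fun x => by by_cases hx : x = 0 <;> simp_all)
  funext x
  by_cases hx : x = 0
  · subst hx
    simpa [delta0] using (by decide : ∀ c : ZMod 2, c ≠ 0 → c = 1) _ h00
  · simp [delta0, hx, hsupp x hx]

lemma exists_mul_coord_ne_zero {h : BF n} (h0 : h ≠ 0) (hδ : h ≠ delta0) :
    ∃ i, h * coord i ≠ 0 := by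
  obtain ⟨a, ha0, ha⟩ : ∃ a ≠ 0, h a ≠ 0 := by
    by_contra! hsupp
    exact hδ (eq_delta0_of_apply_eq_zero h0 hsupp)
  obtain ⟨i, hi⟩ := Function.ne_iff.mp ha0
  refine ⟨i, fun hzero => ?_⟩
  have := congrFun hzero a
  simp_all

lemma FAI_le {f g : BF n} (hg : g ≠ 1) (hfg : f * g ≠ 0) : FAI f ≤ degB g + degB (f * g) :=
  Nat.sInf_le ⟨g, hg, hfg, rfl⟩

lemma FAI_le_add_one {f : BF n} (h0 : f ≠ 0) (hδ : f ≠ delta0) : FAI f ≤ n + 1 := by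
  obtain ⟨i, hi⟩ := exists_mul_coord_ne_zero h0 hδ
  calc FAI f ≤ degB (coord i) + degB (f * coord i) := FAI_le (coord_ne_one i) hi
    _ ≤ 1 + n := add_le_add (degB_coord_le i) (degB_le _)
    _ = n + 1 := add_comm 1 n

lemma exists_FAI_eq {f : BF n} (h0 : f ≠ 0) (hδ : f ≠ delta0) :
    ∃ g, g ≠ 1 ∧ f * g ≠ 0 ∧ FAI f = degB g + degB (f * g) := by
  obtain ⟨i, hi⟩ := exists_mul_coord_ne_zero h0 hδ
  have hne : {m | ∃ g : BF n, g ≠ 1 ∧ f * g ≠ 0 ∧ m = degB g + degB (f * g)}.Nonempty :=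
    ⟨_, coord i, coord_ne_one i, hi, rfl⟩
  exact Nat.sInf_mem hne

lemma FAI_add_delta0_le {f : BF n} (h0 : f ≠ 0) (hδ : f ≠ delta0) :
    FAI (f + delta0) ≤ FAI f + 2 := by
  obtain ⟨g, hg1, hfg, hFAI⟩ := exists_FAI_eq h0 hδ
  by_cases hfgδ : f * g = delta0
  · have hg0 : g ≠ 0 := by rintro rfl; simp at hfg
    have := one_le_degB hg0 hg1
    have := le_degB_delta0 (n := n)
    have := FAI_le_add_one (f := f + delta0) (mt CharTwo.add_eq_zero.mp hδ)
      (fun h => h0 (by simpa using h))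
    rw [hfgδ] at hFAI
    omega
  · obtain ⟨i, hi⟩ := exists_mul_coord_ne_zero hfg hfgδ
    have hmul : (f + delta0) * (g * coord i) = f * g * coord i := by
      rw [add_mul, mul_left_comm delta0, delta0_mul_coord, mul_zero, add_zero, mul_assoc]
    calc FAI (f + delta0) ≤ degB (g * coord i) + degB (f * g * coord i) := by
          rw [← hmul]; exact FAI_le (mul_coord_ne_one g i) (hmul ▸ hi)
      _ ≤ (degB g + 1) + (degB (f * g) + 1) :=
          add_le_add (degB_mul_coord_le g i) (degB_mul_coord_le (f * g) i)
      _ = FAI f + 2 := by omega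

end

theorem stmt10 {n : ℕ} (f : BF n) (hf : f ≠ delta0)
    (hfc : f + delta0 ≠ delta0) :
    |(FAI (f + delta0) : ℤ) - (FAI f : ℤ)| ≤ 2 := by
  have hf0 : f ≠ 0 := fun h => hfc (by rw [h, zero_add])
  have hfc0 : f + delta0 ≠ 0 := mt CharTwo.add_eq_zero.mp hf
  have h₁ := FAI_add_delta0_le hf0 hf
  have h₂ := FAI_add_delta0_le hfc0 hfc
  rw [CharTwo.add_cancel_right] at h₂
  rw [abs_le]
  omega
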